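/- Let F_{log} = {0} ∪ {1/log k : k ∈ ℕ, k ≥ 2} ⊆ ℝ. Then for every θ ∈ (0,1], the lower and upper θ-intermediate dimensions of F_{log} equal 1, while the Hausdorff dimension of F_{log} is 0; hence θ ↦ dim_θ F_{log} is discontinuous at θ = 0. -/

import Mathlib

open Set

noncomputable section

/-- There is a countable cover of `F` by sets whose diameters all lie between `lo` and `hi`,
with `s`-power diameter sum at most `ε`. -/
def ICov {X : Type} [PseudoEMetricSpace X] (F : Set X) (s lo hi ε : ℝ) : Prop :=
  ∃ (ι : Type) (_ : Countable ι) (U : ι → Set X), F ⊆ ⋃ i, U i ∧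
    (∀ i, ENNReal.ofReal lo ≤ EMetric.diam (U i) ∧ EMetric.diam (U i) ≤ ENNReal.ofReal hi) ∧
    ∑' i, EMetric.diam (U i) ^ s ≤ ENNReal.ofReal ε

/-- There is a countable cover of `F` with no diameter restrictions and
`s`-power diameter sum at most `ε`. -/
def HCov {X : Type} [PseudoEMetricSpace X] (F : Set X) (s ε : ℝ) : Prop :=
  ∃ (ι : Type) (_ : Countable ι) (U : ι → Set X), F ⊆ ⋃ i, U i ∧
    ∑' i, EMetric.diam (U i) ^ s ≤ ENNReal.ofReal ε

/-- The lower `θ`-intermediate dimension. -/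
def lowerIDim {X : Type} [PseudoEMetricSpace X] (F : Set X) (θ : ℝ) : ℝ :=
  if θ = 0 then sInf {s : ℝ | 0 ≤ s ∧ ∀ ε > 0, HCov F s ε}
  else sInf {s : ℝ | 0 ≤ s ∧ ∀ ε > 0, ∀ δ₀ > 0, ∃ δ : ℝ, 0 < δ ∧ δ ≤ δ₀ ∧
    ICov F s (δ ^ (1 / θ)) δ ε}

/-- The upper `θ`-intermediate dimension. -/
def upperIDim {X : Type} [PseudoEMetricSpace X] (F : Set X) (θ : ℝ) : ℝ :=
  if θ = 0 then sInf {s : ℝ | 0 ≤ s ∧ ∀ ε > 0, HCov F s ε}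
  else sInf {s : ℝ | 0 ≤ s ∧ ∀ ε > 0, ∃ δ₀ > (0:ℝ), ∀ δ : ℝ, 0 < δ → δ ≤ δ₀ →
    ICov F s (δ ^ (1 / θ)) δ ε}

/-- A countable cover of `F` by sets all of diameter exactly `δ`,
with `s`-power diameter sum at most `ε`. -/
def EqCov {X : Type} [PseudoEMetricSpace X] (F : Set X) (s δ ε : ℝ) : Prop :=
  ∃ (ι : Type) (_ : Countable ι) (U : ι → Set X), F ⊆ ⋃ i, U i ∧
    (∀ i, EMetric.diam (U i) = ENNReal.ofReal δ) ∧
    ∑' i, EMetric.diam (U i) ^ s ≤ ENNReal.ofReal ε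

/-- The lower box dimension. -/
def lowerBoxDim {X : Type} [PseudoEMetricSpace X] (F : Set X) : ℝ :=
  sInf {s : ℝ | 0 ≤ s ∧ ∀ ε > 0, ∀ δ₀ > 0, ∃ δ : ℝ, 0 < δ ∧ δ ≤ δ₀ ∧ EqCov F s δ ε}

/-- The upper box dimension. -/
def upperBoxDim {X : Type} [PseudoEMetricSpace X] (F : Set X) : ℝ :=
  sInf {s : ℝ | 0 ≤ s ∧ ∀ ε > 0, ∃ δ₀ > (0:ℝ), ∀ δ : ℝ, 0 < δ → δ ≤ δ₀ → EqCov F s δ ε}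

/-- The Assouad dimension. -/
def assouadDim {X : Type} [PseudoEMetricSpace X] (F : Set X) : ℝ :=
  sInf {s : ℝ | 0 ≤ s ∧ ∃ C > (0:ℝ), ∀ x ∈ F, ∀ r R : ℝ, 0 < r → r < R →
    ∃ t : Finset (Set X), (F ∩ EMetric.closedBall x (ENNReal.ofReal R) ⊆ ⋃ U ∈ t, U) ∧
      (∀ U ∈ t, EMetric.diam U ≤ ENNReal.ofReal r) ∧ (t.card : ℝ) ≤ C * (R / r) ^ s}

end

/-- The set `{0} ∪ {1 / log k : k ∈ ℕ, k ≥ 2}`. -/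
noncomputable def Flog : Set ℝ :=
  insert 0 {x : ℝ | ∃ k : ℕ, 2 ≤ k ∧ x = 1 / Real.log k}

/-!
`Flog` is countable, so its Hausdorff dimension and its `0`-intermediate dimension vanish.
For `θ > 0` the admissible covers consist of sets of diameter between `δ ^ (1 / θ)` and `δ`.

Upper bound: all but finitely many points of `Flog` lie in `[0, t]`, which about `t / δ`
intervals of length `δ` cover, so there are `1`-covers of cost about `t + O(δ)`.

Lower bound: the `K ≈ δ ^ (-1 / θ)` points `1 / log k`, `K < k ≤ 2K`, have consecutive gaps at
least `1 / (3K log² (3K))`, so a cover set containing `m ≥ 2` of them has diameter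
`≳ m / (K log² K)`. For `s < 1` every admissible cover therefore costs at least
`K · min (δ ^ (s / θ), δ ^ (s - 1) / (K log² K))`, which is unbounded as `δ → 0` because a power
of `δ` beats any power of `log δ`.
-/

open Filter Topology
open scoped ENNReal

lemma ENNReal.natCast_card_le_tsum_card_filter {α ι : Type*} (I : Finset α)
    (V : ι → Set α) [∀ i, DecidablePred (· ∈ V i)] (hI : ∀ k ∈ I, ∃ i, k ∈ V i) :
    (I.card : ℝ≥0∞) ≤ ∑' i, ((I.filter (· ∈ V i)).card : ℝ≥0∞) := by
  calc (I.card : ℝ≥0∞) = ∑ k ∈ I, 1 := by simp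
    _ ≤ ∑ k ∈ I, ∑' i, if k ∈ V i then 1 else 0 := Finset.sum_le_sum fun k hk => by
        obtain ⟨i, hi⟩ := hI k hk
        simpa [hi] using ENNReal.le_tsum (f := fun i => if k ∈ V i then (1 : ℝ≥0∞) else 0) i
    _ = ∑' i, ((I.filter (· ∈ V i)).card : ℝ≥0∞) := by
        rw [← Summable.tsum_finsetSum fun _ _ => ENNReal.summable]
        simp only [Finset.sum_boole]

lemma ofReal_card_sub_one_mul_le_ediam {X : Type*} [PseudoEMetricSpace X] {f : ℕ → X} {g : ℝ}
    (hg : 0 ≤ g) {A : Finset ℕ}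
    (hsep : ∀ j ∈ A, ∀ l ∈ A, j ≤ l → ENNReal.ofReal ((l - j) * g) ≤ edist (f j) (f l))
    {U : Set X} (hAU : ∀ k ∈ A, f k ∈ U) :
    ENNReal.ofReal ((A.card - 1) * g) ≤ Metric.ediam U := by
  rcases A.eq_empty_or_nonempty with rfl | hA
  · simp [ENNReal.ofReal_of_nonpos, hg]
  set j := A.min' hA
  set l := A.max' hA
  have hjl : j ≤ l := A.min'_le l (A.max'_mem hA)
  have hcard : A.card + j ≤ l + 1 := by
    have := Finset.card_le_card
      (show A ⊆ Finset.Icc j l from fun k hk => Finset.mem_Icc.2 ⟨A.min'_le k hk, A.le_max' k hk⟩)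
    rw [Nat.card_Icc] at this
    omega
  calc ENNReal.ofReal ((A.card - 1) * g) ≤ ENNReal.ofReal ((l - j) * g) := by
        have : (A.card : ℝ) + j ≤ l + 1 := by exact_mod_cast hcard
        exact ENNReal.ofReal_le_ofReal (mul_le_mul_of_nonneg_right (by linarith) hg)
    _ ≤ edist (f j) (f l) := hsep j (A.min'_mem hA) l (A.max'_mem hA) hjl
    _ ≤ Metric.ediam U :=
        Metric.edist_le_ediam_of_mem (hAU j (A.min'_mem hA)) (hAU l (A.max'_mem hA))

lemma min_rpow_mul_le_rpow {s lo hi d g : ℝ} {m : ℕ} (hs0 : 0 ≤ s) (hs1 : s ≤ 1) (hlo : 0 < lo)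
    (hlod : lo ≤ d) (hdhi : d ≤ hi) (hg : 0 ≤ g) (hm : (m - 1) * g ≤ d) :
    min (lo ^ s) (g * hi ^ (s - 1) / 2) * m ≤ d ^ s := by
  have hd : 0 < d := hlo.trans_le hlod
  rcases Nat.lt_or_ge m 2 with hm2 | hm2
  · interval_cases m
    · simp [Real.rpow_nonneg hd.le]
    · simpa using (min_le_left _ _).trans (Real.rpow_le_rpow hlo.le hlod hs0)
  have hmg : (m : ℝ) / 2 * g ≤ d := by
    have : (2 : ℝ) ≤ m := by exact_mod_cast hm2
    nlinarith
  calc min (lo ^ s) (g * hi ^ (s - 1) / 2) * m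
      ≤ g * hi ^ (s - 1) / 2 * m := by gcongr; exact min_le_right _ _
    _ = (m / 2 * g) * hi ^ (s - 1) := by ring
    _ ≤ d * d ^ (s - 1) := mul_le_mul hmg (Real.rpow_le_rpow_of_nonpos hd hdhi (by linarith))
        (Real.rpow_nonneg (hd.le.trans hdhi) _) hd.le
    _ = d ^ s := by rw [Real.rpow_sub hd, Real.rpow_one, mul_div_cancel₀ _ hd.ne']

section Covers

variable {X : Type} [PseudoEMetricSpace X]

lemma ICov.mono {F : Set X} {s lo hi ε ε' : ℝ} (h : ICov F s lo hi ε) (hε : ε ≤ ε') :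
    ICov F s lo hi ε' := by
  obtain ⟨ι, hι, U, hcov, hdiam, hsum⟩ := h
  exact ⟨ι, hι, U, hcov, hdiam, hsum.trans (ENNReal.ofReal_le_ofReal hε)⟩

lemma HCov.of_countable {F : Set X} (hF : F.Countable) {s : ℝ} (hs : 0 < s) (ε : ℝ) :
    HCov F s ε := by
  have := hF.to_subtype
  refine ⟨F, inferInstance, fun x => {(x : X)}, fun x hx => mem_iUnion.2 ⟨⟨x, hx⟩, rfl⟩, ?_⟩
  simp [EMetric.diam, Metric.ediam_singleton, ENNReal.zero_rpow_of_pos hs]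

lemma ICov.card_mul_le {F : Set X} {s lo hi ε g : ℝ}
    (h : ICov F s lo hi ε) (hs0 : 0 ≤ s) (hs1 : s ≤ 1) (hlo : 0 < lo) (hε : 0 ≤ ε) (hg : 0 ≤ g)
    {f : ℕ → X} {I : Finset ℕ} (hfF : ∀ k ∈ I, f k ∈ F)
    (hsep : ∀ j ∈ I, ∀ l ∈ I, j ≤ l → ENNReal.ofReal ((l - j) * g) ≤ edist (f j) (f l)) :
    min (lo ^ s) (g * hi ^ (s - 1) / 2) * I.card ≤ ε := by
  classical
  set c := min (lo ^ s) (g * hi ^ (s - 1) / 2)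
  rcases le_or_gt c 0 with hc | hc
  · exact (mul_nonpos_of_nonpos_of_nonneg hc (Nat.cast_nonneg _)).trans hε
  obtain ⟨ι, -, U, hcov, hdiam, hsum⟩ := h
  simp only [EMetric.diam] at hdiam hsum
  have hpiece : ∀ i, ENNReal.ofReal c * (I.filter (f · ∈ U i)).card ≤ Metric.ediam (U i) ^ s := by
    intro i
    obtain ⟨hlo_le, hle_hi⟩ := hdiam i
    set d := (Metric.ediam (U i)).toReal
    have hd0 : 0 ≤ d := ENNReal.toReal_nonneg
    have hd : Metric.ediam (U i) = ENNReal.ofReal d :=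
      (ENNReal.ofReal_toReal (ne_top_of_le_ne_top ENNReal.ofReal_ne_top hle_hi)).symm
    have hm := ofReal_card_sub_one_mul_le_ediam (A := I.filter (f · ∈ U i)) (U := U i) hg
      (fun j hj l hl => hsep j (Finset.mem_filter.1 hj).1 l (Finset.mem_filter.1 hl).1)
      (fun k hk => (Finset.mem_filter.1 hk).2)
    rw [hd, ENNReal.ofReal_le_ofReal_iff hd0] at hm hlo_le
    rw [hd, ENNReal.ofReal_le_ofReal_iff'] at hle_hi
    rw [hd, ← ENNReal.ofReal_natCast, ← ENNReal.ofReal_mul hc.le,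
      ENNReal.ofReal_rpow_of_nonneg hd0 hs0]
    refine ENNReal.ofReal_le_ofReal (min_rpow_mul_le_rpow hs0 hs1 hlo hlo_le ?_ hg hm)
    exact hle_hi.resolve_right (by linarith)
  have hcount := ENNReal.natCast_card_le_tsum_card_filter I (fun i => {k | f k ∈ U i})
    fun k hk => by simpa using mem_iUnion.1 (hcov (hfF k hk))
  rw [← ENNReal.ofReal_le_ofReal_iff hε, ENNReal.ofReal_mul hc.le, ENNReal.ofReal_natCast]
  calc ENNReal.ofReal c * I.card
      ≤ ENNReal.ofReal c * ∑' i, ((I.filter (f · ∈ U i)).card : ℝ≥0∞) := by gcongr; exact hcount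
    _ = ∑' i, ENNReal.ofReal c * (I.filter (f · ∈ U i)).card := ENNReal.tsum_mul_left.symm
    _ ≤ ∑' i, Metric.ediam (U i) ^ s := ENNReal.tsum_le_tsum hpiece
    _ ≤ ENNReal.ofReal ε := hsum

end Covers

lemma ICov.one_of_subset_Icc_union {F : Set ℝ} {t lo δ : ℝ} {S : Finset ℝ}
    (hF : F ⊆ Icc 0 t ∪ S) (ht : 0 ≤ t) (hδ : 0 < δ) (hlo : lo ≤ δ) :
    ICov F 1 lo δ (t + (S.card + 2) * δ) := by
  set n := ⌈t / δ⌉₊ + 1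
  have hdiam : ∀ a, Metric.ediam (Icc a (a + δ)) = ENNReal.ofReal δ := by
    simp [Real.ediam_Icc]
  refine ⟨Fin n ⊕ S, inferInstance,
    Sum.elim (fun j => Icc (j * δ) (j * δ + δ)) (fun x => Icc x (x + δ)), ?_, ?_, ?_⟩
  · intro x hx
    rcases hF hx with ⟨hx0, hxt⟩ | hxS
    · have hj : ⌊x / δ⌋₊ < n := by
        have := (Nat.floor_le_floor (div_le_div_of_nonneg_right hxt hδ.le)).trans
          (Nat.floor_le_ceil (t / δ))
        omega
      refine mem_iUnion.2 ⟨Sum.inl ⟨_, hj⟩, ?_⟩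
      have h1 := Nat.floor_le (div_nonneg hx0 hδ.le)
      have h2 := Nat.lt_floor_add_one (x / δ)
      rw [le_div_iff₀ hδ] at h1
      rw [div_lt_iff₀ hδ] at h2
      exact ⟨h1, by linarith⟩
    · exact mem_iUnion.2 ⟨Sum.inr ⟨x, hxS⟩, ⟨le_rfl, by linarith⟩⟩
  · rintro (j | x) <;> simp only [Sum.elim_inl, Sum.elim_inr, EMetric.diam, hdiam] <;>
      exact ⟨ENNReal.ofReal_le_ofReal hlo, le_rfl⟩
  · have hn : (n : ℝ) * δ ≤ t + 2 * δ := by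
      have := Nat.ceil_lt_add_one (div_nonneg ht hδ.le)
      have : (n : ℝ) ≤ t / δ + 2 := by simp only [n]; push_cast; linarith
      calc (n : ℝ) * δ ≤ (t / δ + 2) * δ := by gcongr
        _ = t + 2 * δ := by field_simp
    simp only [tsum_fintype, Fintype.sum_sum_type, Sum.elim_inl, Sum.elim_inr, EMetric.diam,
      hdiam, ENNReal.rpow_one, Finset.sum_const, Finset.card_univ, Fintype.card_fin,
      Fintype.card_coe, nsmul_eq_mul, ← add_mul]
    rw [← ENNReal.ofReal_natCast, ← ENNReal.ofReal_natCast S.card,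
      ← ENNReal.ofReal_add (by positivity) (by positivity), ← ENNReal.ofReal_mul (by positivity)]
    exact ENNReal.ofReal_le_ofReal (by nlinarith)

lemma eventually_nhdsGT_zero_iff {P : ℝ → Prop} :
    (∀ᶠ δ in 𝓝[>] 0, P δ) ↔ ∃ δ₀ > 0, ∀ δ : ℝ, 0 < δ → δ ≤ δ₀ → P δ := by
  simp [(nhdsGT_basis_Ioc (0 : ℝ)).eventually_iff, and_imp]

lemma frequently_nhdsGT_zero_iff {P : ℝ → Prop} :
    (∃ᶠ δ in 𝓝[>] 0, P δ) ↔ ∀ δ₀ > 0, ∃ δ : ℝ, 0 < δ ∧ δ ≤ δ₀ ∧ P δ := by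
  simp [(nhdsGT_basis_Ioc (0 : ℝ)).frequently_iff, and_assoc]

lemma eventually_six_mul_log_sq_lt_rpow {a : ℝ} (ha : 0 < a) :
    ∀ᶠ x : ℝ in atTop, 6 * Real.log (6 * x) ^ 2 < x ^ a := by
  have hc : (0 : ℝ) < 1 / (12 * 6 ^ a) := by positivity
  have h := ((isLittleO_log_rpow_rpow_atTop 2 ha).comp_tendsto
    (tendsto_id.const_mul_atTop (by norm_num : (0 : ℝ) < 6))).bound hc
  filter_upwards [h, eventually_gt_atTop 0] with x hx hx0
  simp only [Function.comp_apply, id, Real.norm_eq_abs, Real.rpow_two,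
    Real.mul_rpow (by norm_num : (0 : ℝ) ≤ 6) hx0.le] at hx
  rw [abs_of_nonneg (sq_nonneg _), abs_of_pos (by positivity)] at hx
  have : 1 / (12 * 6 ^ a) * (6 ^ a * x ^ a) = x ^ a / 12 := by field_simp
  linarith [Real.rpow_pos_of_pos hx0 a]

namespace Flog

noncomputable def point (k : ℕ) : ℝ := 1 / Real.log k

lemma point_mem {k : ℕ} (hk : 2 ≤ k) : point k ∈ Flog := Or.inr ⟨k, hk, rfl⟩

lemma countable : Flog.Countable :=
  ((countable_range point).mono (by rintro _ ⟨k, -, rfl⟩; exact ⟨k, rfl⟩)).insert 0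

lemma tendsto_point : Tendsto point atTop (𝓝 0) :=
  (Real.tendsto_log_atTop.comp tendsto_natCast_atTop_atTop).inv_tendsto_atTop.congr
    fun k => by simp [point]

lemma exists_finset_subset_Icc_union {t : ℝ} (ht : 0 < t) :
    ∃ S : Finset ℝ, Flog ⊆ Icc 0 t ∪ S := by
  obtain ⟨N, hN⟩ := eventually_atTop.1 (tendsto_point.eventually (Iic_mem_nhds ht))
  refine ⟨(Finset.range N).image point, ?_⟩
  rintro _ (rfl | ⟨k, -, rfl⟩)
  · exact Or.inl ⟨le_rfl, ht.le⟩
  rcases lt_or_ge k N with hk | hk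
  · exact Or.inr (Finset.mem_image_of_mem point (Finset.mem_range.2 hk))
  · exact Or.inl ⟨one_div_nonneg.2 (Real.log_natCast_nonneg k), hN k hk⟩

lemma eventually_iCov_one {θ : ℝ} (hθ : θ ∈ Ioc 0 1) {ε : ℝ} (hε : 0 < ε) :
    ∀ᶠ δ in 𝓝[>] 0, ICov Flog 1 (δ ^ (1 / θ)) δ ε := by
  obtain ⟨S, hS⟩ := exists_finset_subset_Icc_union (half_pos hε)
  refine eventually_nhdsGT_zero_iff.2 ⟨min 1 (ε / (2 * (S.card + 2))), by positivity, ?_⟩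
  intro δ hδ hδ₀
  have hlo : δ ^ (1 / θ) ≤ δ := by
    simpa using Real.rpow_le_rpow_of_exponent_ge hδ (hδ₀.trans (min_le_left _ _))
      ((one_le_div hθ.1).2 hθ.2)
  refine (ICov.one_of_subset_Icc_union hS (half_pos hε).le hδ hlo).mono ?_
  have := (le_div_iff₀ (by positivity)).1 (hδ₀.trans (min_le_right _ _))
  linarith

noncomputable def gapBound (K : ℕ) : ℝ := 1 / (3 * K * Real.log (3 * K) ^ 2)

lemma gapBound_nonneg (K : ℕ) : 0 ≤ gapBound K := by
  unfold gapBound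
  positivity

lemma natCast_mul_gapBound {K : ℕ} (hK : K ≠ 0) :
    K * gapBound K = 1 / (3 * Real.log (3 * K) ^ 2) := by
  unfold gapBound
  field_simp

lemma one_div_mul_log_sq_le_point_sub_succ {k : ℕ} (hk : 2 ≤ k) :
    1 / ((k + 1) * Real.log (k + 1) ^ 2) ≤ point k - point (k + 1) := by
  have hk1 : (1 : ℝ) < k := by exact_mod_cast hk
  have hlk : 0 < Real.log k := Real.log_pos hk1
  have hlk' : Real.log k ≤ Real.log (k + 1) := Real.log_le_log (by linarith) (by linarith)
  have hlk1 : 0 < Real.log (k + 1) := hlk.trans_le hlk'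
  have hstep : 1 / (k + 1) ≤ Real.log (k + 1) - Real.log k := by
    have := Real.one_sub_inv_le_log_of_pos (x := (k + 1) / k) (by positivity)
    rw [Real.log_div (by positivity) (by positivity), inv_div] at this
    calc 1 / ((k : ℝ) + 1) = 1 - k / (k + 1) := by field_simp; ring
      _ ≤ _ := this
  have hpoint : point k - point (k + 1) =
      (Real.log (k + 1) - Real.log k) / (Real.log k * Real.log (k + 1)) := by
    simp only [point, Nat.cast_add, Nat.cast_one]
    field_simp
  rw [hpoint, ← div_div]
  exact div_le_div₀ (sub_nonneg.2 hlk') hstep (mul_pos hlk hlk1)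
    (by rw [sq]; exact mul_le_mul_of_nonneg_right hlk' hlk1.le)

lemma gapBound_le_point_sub_succ {K k : ℕ} (hK : K + 1 ≤ k) (hk : k + 1 ≤ 2 * K) :
    gapBound K ≤ point k - point (k + 1) := by
  refine le_trans ?_ (one_div_mul_log_sq_le_point_sub_succ (by omega))
  have hk' : (k : ℝ) + 1 ≤ 3 * K := by norm_cast; omega
  have hl : 0 < Real.log (k + 1) := Real.log_pos (by norm_cast; omega)
  unfold gapBound
  gcongr

lemma sub_mul_gapBound_le {K j l : ℕ} (hj : K + 1 ≤ j) (hjl : j ≤ l) (hl : l ≤ 2 * K) :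
    (l - j) * gapBound K ≤ point j - point l := by
  induction l, hjl using Nat.le_induction with
  | base => simp
  | succ l hjl ih =>
    have := gapBound_le_point_sub_succ (le_trans hj hjl) (by omega : l + 1 ≤ 2 * K)
    push_cast
    linarith [ih (by omega)]

lemma not_iCov {s lo hi : ℝ} {K : ℕ} (hs0 : 0 ≤ s) (hs1 : s ≤ 1) (hlo : 0 < lo)
    (h1 : 1 < K * lo ^ s) (h2 : 2 < K * gapBound K * hi ^ (s - 1)) :
    ¬ ICov Flog s lo hi 1 := by
  intro h
  have hcard := h.card_mul_le hs0 hs1 hlo zero_le_one (gapBound_nonneg K)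
    (f := point) (I := Finset.Icc (K + 1) (2 * K))
    (fun k hk => point_mem (by rw [Finset.mem_Icc] at hk; omega))
    (fun j hj l hl hjl => by
      rw [Finset.mem_Icc] at hj hl
      rw [edist_dist, Real.dist_eq]
      exact ENNReal.ofReal_le_ofReal ((sub_mul_gapBound_le hj.1 hjl hl.2).trans (le_abs_self _)))
  rw [Nat.card_Icc, show 2 * K + 1 - (K + 1) = K by omega, mul_comm,
    mul_min_of_nonneg _ _ (Nat.cast_nonneg K)] at hcard
  exact (lt_min h1 (by linarith)).not_ge hcard

lemma eventually_not_iCov {θ s : ℝ} (hθ : 0 < θ) (hs0 : 0 ≤ s) (hs1 : s < 1) :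
    ∀ᶠ δ in 𝓝[>] 0, ¬ ICov Flog s (δ ^ (1 / θ)) δ 1 := by
  have hx : Tendsto (fun δ : ℝ => δ ^ (-(1 / θ))) (𝓝[>] 0) atTop :=
    tendsto_rpow_neg_nhdsGT_zero (by simpa using hθ)
  filter_upwards [self_mem_nhdsWithin, hx.eventually (eventually_gt_atTop 1),
    hx.eventually (eventually_six_mul_log_sq_lt_rpow (mul_pos hθ (sub_pos.2 hs1)))]
    with δ (hδ : 0 < δ) hx1 hlog
  set x := δ ^ (-(1 / θ))
  set K := ⌈x⌉₊
  have hx0 : 0 < x := by linarith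
  have hxK : x ≤ K := Nat.le_ceil x
  have hK2x : (K : ℝ) ≤ 2 * x := by linarith [Nat.ceil_lt_add_one hx0.le]
  have hlo : δ ^ (1 / θ) = x⁻¹ := by simp only [x, Real.rpow_neg hδ.le, inv_inv]
  have hhi : δ ^ (s - 1) = x ^ (θ * (1 - s)) := by
    rw [← Real.rpow_mul hδ.le]; congr 1; field_simp; ring
  refine not_iCov (K := K) hs0 hs1.le (Real.rpow_pos_of_pos hδ _) ?_ ?_
  · rw [hlo, Real.inv_rpow hx0.le]
    calc 1 < x ^ (1 - s) := Real.one_lt_rpow hx1 (by linarith)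
      _ = x * (x ^ s)⁻¹ := by rw [Real.rpow_sub hx0, Real.rpow_one, div_eq_mul_inv]
      _ ≤ K * (x ^ s)⁻¹ := by gcongr
  · have hK : (1 : ℝ) ≤ K := by linarith
    have hlogK : 0 < Real.log (3 * K) := Real.log_pos (by linarith)
    have hlogx : Real.log (3 * K) ≤ Real.log (6 * x) :=
      Real.log_le_log (by positivity) (by linarith)
    rw [hhi, natCast_mul_gapBound (Nat.ceil_pos.2 hx0).ne']
    calc 2 < x ^ (θ * (1 - s)) / (3 * Real.log (6 * x) ^ 2) := by
          rw [lt_div_iff₀ (by nlinarith)]; linarith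
      _ ≤ x ^ (θ * (1 - s)) / (3 * Real.log (3 * K) ^ 2) := by gcongr
      _ = 1 / (3 * Real.log (3 * K) ^ 2) * x ^ (θ * (1 - s)) := by ring

lemma lowerIDim_eq_one {θ : ℝ} (hθ : θ ∈ Ioc 0 1) : lowerIDim Flog θ = 1 := by
  rw [lowerIDim, if_neg hθ.1.ne']
  refine IsLeast.csInf_eq ⟨⟨zero_le_one, fun ε hε => frequently_nhdsGT_zero_iff.1
    (eventually_iCov_one hθ hε).frequently⟩, fun s ⟨hs0, hs⟩ => ?_⟩
  by_contra! hs1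
  obtain ⟨δ, hnot, hcov⟩ := ((eventually_not_iCov hθ.1 hs0 hs1).and_frequently
    (frequently_nhdsGT_zero_iff.2 (hs 1 one_pos))).exists
  exact hnot hcov

lemma upperIDim_eq_one {θ : ℝ} (hθ : θ ∈ Ioc 0 1) : upperIDim Flog θ = 1 := by
  rw [upperIDim, if_neg hθ.1.ne']
  refine IsLeast.csInf_eq ⟨⟨zero_le_one, fun ε hε => eventually_nhdsGT_zero_iff.1
    (eventually_iCov_one hθ hε)⟩, fun s ⟨hs0, hs⟩ => ?_⟩
  by_contra! hs1
  obtain ⟨δ, hnot, hcov⟩ := ((eventually_not_iCov hθ.1 hs0 hs1).and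
    (eventually_nhdsGT_zero_iff.2 (hs 1 one_pos))).exists
  exact hnot hcov

lemma lowerIDim_zero : lowerIDim Flog 0 = 0 := by
  rw [lowerIDim, if_pos rfl]
  refine le_antisymm ?_ (Real.sInf_nonneg fun s hs => hs.1)
  calc sInf {s : ℝ | 0 ≤ s ∧ ∀ ε > 0, HCov Flog s ε} ≤ sInf (Ioi 0) :=
        csInf_le_csInf ⟨0, fun s hs => hs.1⟩ nonempty_Ioi
          fun s hs => ⟨le_of_lt hs, fun ε _ => HCov.of_countable countable hs ε⟩
    _ = 0 := csInf_Ioi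

lemma not_continuousWithinAt_lowerIDim :
    ¬ ContinuousWithinAt (fun θ => lowerIDim Flog θ) (Icc 0 1) 0 := by
  intro h
  have hcl : (0 : ℝ) ∈ closure (Ioc 0 1) := by
    rw [closure_Ioc zero_ne_one]; exact left_mem_Icc.2 zero_le_one
  have := (h.mono Ioc_subset_Icc_self).mem_closure_image hcl
  rw [lowerIDim_zero] at this
  have himage : (fun θ => lowerIDim Flog θ) '' Ioc 0 1 ⊆ {1} := by
    rintro _ ⟨θ, hθ, rfl⟩; exact lowerIDim_eq_one hθ
  simpa using closure_mono himage this

end Flog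

theorem stmt17 :
    (∀ θ ∈ Set.Ioc (0:ℝ) 1, lowerIDim Flog θ = 1 ∧ upperIDim Flog θ = 1) ∧
    dimH Flog = 0 ∧
    ¬ ContinuousWithinAt (fun θ : ℝ => lowerIDim Flog θ) (Set.Icc (0:ℝ) 1) 0 :=
  ⟨fun _ hθ => ⟨Flog.lowerIDim_eq_one hθ, Flog.upperIDim_eq_one hθ⟩, Flog.countable.dimH_zero,
    Flog.not_continuousWithinAt_lowerIDim⟩
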